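/- Let (x_n) be a real sequence satisfying x_{n+1} = 2 x_n x_{n-1} - x_{n-2}. If for some n one has |x_{n+1}| > 1, |x_n| > 1, and |x_{n+1} x_n| > |x_{n-1}|, then |x_k| > 1 for all k ≥ n, and in fact |x_k| → ∞ (the sequence is unbounded). -/

import Mathlib

/-!
Once two consecutive terms exceed 1 in absolute value and dominate the term before them in the
sense `|x n| < |x (n + 2)| * |x (n + 1)|`, the recursion gives
`|x (n + 3)| ≥ 2 |x (n + 2)| |x (n + 1)| - |x n| > |x (n + 2)| |x (n + 1)|`,
and the same three conditions hold one step later. Hence from then on every term is at least the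
product of the two before it; all terms stay above `c = min (|x (n + 1)|) (|x (n + 2)|) > 1`, so the
sequence grows at least geometrically with ratio `c`.
-/

open Filter

theorem abs_mul_lt_abs_two_mul_mul_sub {u v w : ℝ} (h : |u| < |v| * |w|) :
    |v| * |w| < |2 * v * w - u| :=
  calc |v| * |w| < |2 * v * w| - |u| := by
        rw [abs_mul, abs_mul, abs_two]; linarith
    _ ≤ |2 * v * w - u| := abs_sub_abs_le_abs_sub _ _

theorem tendsto_atTop_of_mul_le {b : ℕ → ℝ} (hb₀ : 1 < b 0) (hb₁ : 1 < b 1)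
    (hb : ∀ m, b (m + 1) * b m ≤ b (m + 2)) : Tendsto b atTop atTop := by
  set c := min (b 0) (b 1)
  have hc : 1 < c := lt_min hb₀ hb₁
  have hc_le : ∀ m, c ≤ b m := by
    intro m
    induction m using Nat.twoStepInduction with
    | zero => exact min_le_left _ _
    | one => exact min_le_right _ _
    | more m ih₀ ih₁ => nlinarith [hb m]
  have hgeom : ∀ m, c * b (m + 1) ≤ b (m + 1 + 1) := fun m => by
    nlinarith [hb m, hc_le m, hc_le (m + 1)]
  exact (tendsto_add_atTop_iff_nat 1).1 (tendsto_atTop_of_geom_le (by linarith) hc hgeom)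

def EscapeAt (x : ℕ → ℝ) (n : ℕ) : Prop :=
  1 < |x (n + 1)| ∧ 1 < |x (n + 2)| ∧ |x n| < |x (n + 2)| * |x (n + 1)|

namespace EscapeAt

variable {x : ℕ → ℝ} {n : ℕ}

theorem mul_lt_abs (hrec : ∀ n : ℕ, x (n + 3) = 2 * x (n + 2) * x (n + 1) - x n)
    (h : EscapeAt x n) : |x (n + 2)| * |x (n + 1)| < |x (n + 3)| := by
  rw [hrec]
  exact abs_mul_lt_abs_two_mul_mul_sub h.2.2

theorem succ (hrec : ∀ n : ℕ, x (n + 3) = 2 * x (n + 2) * x (n + 1) - x n)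
    (h : EscapeAt x n) : EscapeAt x (n + 1) := by
  have h₃ := h.mul_lt_abs hrec
  obtain ⟨h₁, h₂, -⟩ := h
  have hx₃ : 1 < |x (n + 3)| := (one_lt_mul_of_lt_of_le h₂ h₁.le).trans h₃
  refine ⟨h₂, hx₃, ?_⟩
  calc |x (n + 1)| < |x (n + 2)| * |x (n + 1)| := lt_mul_of_one_lt_left (by linarith) h₂
    _ < |x (n + 3)| := h₃
    _ < |x (n + 3)| * |x (n + 2)| := lt_mul_of_one_lt_right (by linarith) h₂

theorem add (hrec : ∀ n : ℕ, x (n + 3) = 2 * x (n + 2) * x (n + 1) - x n)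
    (h : EscapeAt x n) (m : ℕ) : EscapeAt x (n + m) := by
  induction m with
  | zero => exact h
  | succ m ih => exact ih.succ hrec

end EscapeAt

/-- Escape criterion for the Fibonacci trace map `x_{n+1} = 2 x_n x_{n-1} - x_{n-2}`:
if for some `n` one has `|x_{n+1}| > 1`, `|x_n| > 1` and `|x_{n+1} x_n| > |x_{n-1}|`,
then `|x_k| > 1` for all `k ≥ n` and `|x_k| → ∞`. -/
theorem trace_map_escape (x : ℕ → ℝ)
    (hrec : ∀ n : ℕ, x (n + 3) = 2 * x (n + 2) * x (n + 1) - x n)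
    (n : ℕ)
    (h1 : 1 < |x (n + 2)|) (h2 : 1 < |x (n + 1)|) (h3 : |x n| < |x (n + 2) * x (n + 1)|) :
    (∀ k ≥ n + 1, 1 < |x k|) ∧ Tendsto (fun k => |x k|) atTop atTop := by
  have hesc : EscapeAt x n := ⟨h2, h1, by rwa [abs_mul] at h3⟩
  refine ⟨fun k hk => ?_, ?_⟩
  · obtain ⟨m, rfl⟩ := Nat.exists_eq_add_of_le hk
    simpa only [Nat.add_right_comm] using (hesc.add hrec m).1
  · refine (tendsto_add_atTop_iff_nat (n + 1)).1 (tendsto_atTop_of_mul_le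
      (by rwa [zero_add]) (by rwa [Nat.add_comm 1, add_assoc]) fun m => ?_)
    have hmul := (hesc.add hrec m).mul_lt_abs hrec
    rw [show m + 2 + (n + 1) = n + m + 3 by omega, show m + 1 + (n + 1) = n + m + 2 by omega,
      show m + (n + 1) = n + m + 1 by omega]
    exact hmul.le
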